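/- arXiv:1904.03638 — 2 statements merged into one kernel-verified Lean document; each statement's English description precedes it below -/
import Mathlib

section
/- For every d \geq 1, N_2(d) \leq 2 N_2(d-1), where N_2(d) is the maximal number of vertices of a 2-neighborly 0/1-polytope of dimension at most d (in R^d). -/
/-- The set of vertices of the 0/1-cube in `ℝ^d`. -/
def cubeVerts (d : ℕ) : Set (Fin d → ℝ) := {x | ∀ i, x i = 0 ∨ x i = 1}

/-- `X` spans a 2-neighborly polytope: every pair of distinct points of `X`
forms an edge (1-face) of `conv X`. -/
def TwoNeighborly {d : ℕ} (X : Set (Fin d → ℝ)) : Prop :=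
  ∀ u ∈ X, ∀ v ∈ X, u ≠ v → IsExtreme ℝ (convexHull ℝ X) (segment ℝ u v)

/-- `N₂ d`: the maximal number of vertices of a 2-neighborly 0/1-polytope in `ℝ^d`. -/
noncomputable def N2 (d : ℕ) : ℕ :=
  sSup {n : ℕ | ∃ X : Finset (Fin d → ℝ),
    ↑X ⊆ cubeVerts d ∧ TwoNeighborly (↑X : Set (Fin d → ℝ)) ∧ X.card = n}

/-!
Split `X` by the last coordinate. Each half lies in a hyperplane `x_d = c`, on which forgetting
the last coordinate is an injective affine map; an affine map injective on `conv X` carries edges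
of `conv X` to edges of the image, so each half projects to a 2-neighborly 0/1-set in `ℝ^(d-1)`
of the same size, hence has at most `N₂(d-1)` points.
-/

open Set

theorem IsExtreme.image_of_injOn {𝕜 E F : Type*} [Ring 𝕜] [PartialOrder 𝕜] [IsOrderedRing 𝕜]
    [AddCommGroup E] [Module 𝕜 E] [AddCommGroup F] [Module 𝕜 F] {A B : Set E} {f : E →ᵃ[𝕜] F}
    (h : IsExtreme 𝕜 A B) (hA : Convex 𝕜 A) (hf : InjOn f A) :
    IsExtreme 𝕜 (f '' A) (f '' B) := by
  refine ⟨image_mono h.subset, ?_⟩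
  rintro _ ⟨a₁, ha₁, rfl⟩ _ ⟨a₂, ha₂, rfl⟩ _ ⟨b, hb, rfl⟩ hseg
  rw [← image_openSegment] at hseg
  obtain ⟨c, hc, hcb⟩ := hseg
  rw [hf (hA.openSegment_subset ha₁ ha₂ hc) (h.subset hb) hcb] at hc
  exact mem_image_of_mem f (h.left_mem_of_mem_openSegment ha₁ ha₂ hb hc)

namespace TwoNeighborly

theorem mono {d : ℕ} {X Y : Set (Fin d → ℝ)} (h : TwoNeighborly X) (hYX : Y ⊆ X) :
    TwoNeighborly Y := fun u hu v hv huv =>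
  (h u (hYX hu) v (hYX hv) huv).mono (convexHull_mono hYX) (segment_subset_convexHull hu hv)

theorem image {m n : ℕ} {X : Set (Fin m → ℝ)} (h : TwoNeighborly X)
    (f : (Fin m → ℝ) →ᵃ[ℝ] (Fin n → ℝ)) (hf : InjOn f (convexHull ℝ X)) :
    TwoNeighborly (f '' X) := by
  rintro _ ⟨u, hu, rfl⟩ _ ⟨v, hv, rfl⟩ huv
  rw [← f.image_convexHull, ← image_segment]
  exact (h u hu v hv (ne_of_apply_ne f huv)).image_of_injOn (convex_convexHull ℝ X) hf

end TwoNeighborly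

theorem injOn_funLeft_castSucc {n : ℕ} (c : ℝ) :
    InjOn (LinearMap.funLeft ℝ ℝ (Fin.castSucc : Fin n → Fin (n + 1)))
      {x | x (Fin.last n) = c} := fun _ hx _ hy hxy =>
  funext <| Fin.lastCases (hx.trans hy.symm) (congrFun hxy)

theorem cubeVerts_finite (d : ℕ) : (cubeVerts d).Finite :=
  (Set.Finite.pi fun _ => Set.toFinite ({0, 1} : Set ℝ)).subset
    fun _ hx i _ => hx i

theorem card_le_N2 {d : ℕ} {X : Finset (Fin d → ℝ)} (hX : ↑X ⊆ cubeVerts d)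
    (h : TwoNeighborly (X : Set (Fin d → ℝ))) : X.card ≤ N2 d := by
  refine le_csSup ⟨(cubeVerts_finite d).toFinset.card, ?_⟩ ⟨X, hX, h, rfl⟩
  rintro _ ⟨Y, hY, -, rfl⟩
  exact Finset.card_le_card fun y hy => (cubeVerts_finite d).mem_toFinset.2 (hY hy)

theorem card_filter_last_eq_le_N2 {n : ℕ} {X : Finset (Fin (n + 1) → ℝ)}
    (hX : ↑X ⊆ cubeVerts (n + 1)) (h : TwoNeighborly (X : Set (Fin (n + 1) → ℝ))) (c : ℝ) :
    (X.filter (· (Fin.last n) = c)).card ≤ N2 n := by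
  set S := X.filter (· (Fin.last n) = c)
  set π := LinearMap.funLeft ℝ ℝ (Fin.castSucc : Fin n → Fin (n + 1))
  have hS : (S : Set (Fin (n + 1) → ℝ)) ⊆ {x | x (Fin.last n) = c} :=
    fun x hx => (Finset.mem_filter.1 hx).2
  have hinj : InjOn π (convexHull ℝ S) := (injOn_funLeft_castSucc c).mono <|
    convexHull_min hS ((convex_singleton c).linear_preimage
      (LinearMap.proj (R := ℝ) (Fin.last n) : (Fin (n + 1) → ℝ) →ₗ[ℝ] ℝ))
  calc S.card = (S.image π).card :=
        (Finset.card_image_of_injOn (hinj.mono (subset_convexHull ℝ _))).symm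
    _ ≤ N2 n := by
      refine card_le_N2 ?_ ?_
      · rw [Finset.coe_image]
        rintro _ ⟨x, hx, rfl⟩ j
        exact hX (Finset.mem_filter.1 hx).1 j.castSucc
      · rw [Finset.coe_image]
        exact (h.mono (Finset.coe_subset.2 (Finset.filter_subset _ _))).image π.toAffineMap hinj

/-- For every `d ≥ 1`, `N₂(d) ≤ 2 · N₂(d-1)`. -/
theorem stmt5 (d : ℕ) (hd : 1 ≤ d) : N2 d ≤ 2 * N2 (d - 1) := by
  obtain ⟨n, rfl⟩ := Nat.exists_eq_add_of_le' hd
  rw [Nat.add_sub_cancel]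
  refine csSup_le' ?_
  rintro _ ⟨X, hX, h, rfl⟩
  have hne : X.filter (· (Fin.last n) ≠ 0) = X.filter (· (Fin.last n) = 1) :=
    Finset.filter_congr fun x hx => by rcases hX hx (Fin.last n) with h | h <;> simp [h]
  calc X.card
        = (X.filter (· (Fin.last n) = 0)).card + (X.filter (· (Fin.last n) = 1)).card := by
        rw [← hne, Finset.card_filter_add_card_filter_not]
    _ ≤ N2 n + N2 n :=
        add_le_add (card_filter_last_eq_le_N2 hX h 0) (card_filter_last_eq_le_N2 hX h 1)
    _ = 2 * N2 n := (two_mul _).symm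
end

section
/- Let y \in {0,1}^d, y \neq 0, and let Z \subseteq {0,1}^d be a set of vectors each satisfying z \leq y coordinatewise, with 0, y \notin Z. If y \in cone(Z) then {0, y} is not an edge of conv(Z \cup {0, y}). -/
/-- The conical hull of a set `Z ⊆ ℝ^d`: all finite nonnegative combinations. -/
def coneHull {d : ℕ} (Z : Set (Fin d → ℝ)) : Set (Fin d → ℝ) :=
  {x | ∃ (s : Finset (Fin d → ℝ)) (lam : (Fin d → ℝ) → ℝ),
        ↑s ⊆ Z ∧ (∀ z ∈ s, 0 ≤ lam z) ∧ x = ∑ z ∈ s, lam z • z}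

open Finset

theorem IsExtreme.mem_of_centerMass_mem {𝕜 E ι : Type*} [Field 𝕜] [LinearOrder 𝕜]
    [IsStrictOrderedRing 𝕜] [AddCommGroup E] [Module 𝕜 E] {A F : Set E}
    (hF : IsExtreme 𝕜 A F) (hA : Convex 𝕜 A) {t : Finset ι} {w : ι → 𝕜} {z : ι → E}
    (hw : ∀ j ∈ t, 0 ≤ w j) (hz : ∀ j ∈ t, z j ∈ A) (hmem : t.centerMass w z ∈ F)
    {i : ι} (hi : i ∈ t) (hwi : 0 < w i) : z i ∈ F := by
  classical
  have hw' : ∀ j ∈ t.erase i, 0 ≤ w j := fun j hj => hw j (mem_of_mem_erase hj)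
  by_cases hrest : ∑ j ∈ t.erase i, w j = 0
  · have hrest_zero := (sum_eq_zero_iff_of_nonneg hw').1 hrest
    have hcm : t.centerMass w z = z i := by
      rw [← centerMass_subset z (singleton_subset_iff.2 hi), centerMass_singleton _ _ hwi.ne']
      intro j hj hji
      exact hrest_zero j (mem_erase.2 ⟨by simpa using hji, hj⟩)
    rwa [← hcm]
  · have hpos : 0 < ∑ j ∈ t.erase i, w j := (sum_nonneg hw').lt_of_ne' hrest
    rw [← insert_erase hi, centerMass_insert _ _ _ (notMem_erase i t) hrest] at hmem
    refine hF.left_mem_of_mem_openSegment (hz i hi)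
      (hA.centerMass_mem hw' hpos fun j hj => hz j (mem_of_mem_erase hj)) hmem ?_
    exact ⟨_, _, by positivity, by positivity, by field_simp, rfl⟩

lemma exists_eq_one_of_mem_cubeVerts {d : ℕ} {v : Fin d → ℝ} (hv : v ∈ cubeVerts d)
    (hv0 : v ≠ 0) : ∃ i, v i = 1 := by
  by_contra! h
  exact hv0 (funext fun i => (hv i).resolve_right (h i))

lemma eq_of_mem_cubeVerts_of_mem_segment {d : ℕ} {v y : Fin d → ℝ} (hv : v ∈ cubeVerts d)
    (hv0 : v ≠ 0) (hy : y ∈ cubeVerts d) (hvy : v ∈ segment ℝ 0 y) : v = y := by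
  obtain ⟨_, b, -, -, -, hvb⟩ := hvy
  rw [smul_zero, zero_add] at hvb
  obtain ⟨i, hi⟩ := exists_eq_one_of_mem_cubeVerts hv hv0
  have hbyi : b * y i = 1 := by rw [← hi, ← hvb, Pi.smul_apply, smul_eq_mul]
  have hyi : y i = 1 := (hy i).resolve_left fun h => by simp [h] at hbyi
  rw [hyi, mul_one] at hbyi
  rw [← hvb, hbyi, one_smul]

lemma apply_sum_smul_le_sum_of_subset_cubeVerts {d : ℕ} {s : Finset (Fin d → ℝ)}
    {lam : (Fin d → ℝ) → ℝ} (hs : ↑s ⊆ cubeVerts d) (hlam : ∀ z ∈ s, 0 ≤ lam z) (i : Fin d) :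
    (∑ z ∈ s, lam z • z) i ≤ ∑ z ∈ s, lam z := by
  rw [Finset.sum_apply]
  refine sum_le_sum fun z hz => ?_
  have hzi : z i ≤ 1 := by rcases hs hz i with h | h <;> simp [h]
  simpa using mul_le_of_le_one_right (hlam z hz) hzi

theorem stmt19_general {d : ℕ} (y : Fin d → ℝ) (hy : y ∈ cubeVerts d) (hy0 : y ≠ 0)
    (Z : Set (Fin d → ℝ)) (hZ : Z ⊆ cubeVerts d)
    (h0Z : (0 : Fin d → ℝ) ∉ Z) (hyZ : y ∉ Z)
    (hcone : y ∈ coneHull Z) :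
    ¬ IsExtreme ℝ (convexHull ℝ (Z ∪ {0, y})) (segment ℝ 0 y) := by
  intro hF
  obtain ⟨s, lam, hsZ, hlam, hsum⟩ := hcone
  obtain ⟨i, hyi⟩ := exists_eq_one_of_mem_cubeVerts hy hy0
  have hT : 1 ≤ ∑ z ∈ s, lam z := by
    have := apply_sum_smul_le_sum_of_subset_cubeVerts (hsZ.trans hZ) hlam i
    rwa [← hsum, hyi] at this
  have hcm : s.centerMass lam id ∈ segment ℝ 0 y := by
    refine ⟨1 - (∑ z ∈ s, lam z)⁻¹, (∑ z ∈ s, lam z)⁻¹, ?_, by positivity, by ring, ?_⟩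
    · simpa using inv_le_one_of_one_le₀ hT
    · simp [centerMass, hsum]
  obtain ⟨z, hzs, hz⟩ : ∃ z ∈ s, 0 < lam z :=
    exists_lt_of_sum_lt (by simpa using zero_lt_one.trans_le hT)
  have hzF : z ∈ segment ℝ 0 y :=
    hF.mem_of_centerMass_mem (convex_convexHull ℝ _) hlam
      (fun z hz => subset_convexHull ℝ _ (Or.inl (hsZ hz))) hcm hzs hz
  have hz0 : z ≠ 0 := fun h => h0Z (h ▸ hsZ hzs)
  exact hyZ (eq_of_mem_cubeVerts_of_mem_segment (hZ (hsZ hzs)) hz0 hy hzF ▸ hsZ hzs)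

/-- If `y ∈ {0,1}^d`, `y ≠ 0`, and `Z ⊆ {0,1}^d` consists of vectors `z ≤ y`
(coordinatewise) with `0, y ∉ Z`, then `y ∈ cone(Z)` implies that `{0, y}` is
not an edge of `conv (Z ∪ {0, y})`. -/
theorem stmt19 {d : ℕ} (y : Fin d → ℝ) (hy : y ∈ cubeVerts d) (hy0 : y ≠ 0)
    (Z : Set (Fin d → ℝ)) (hZ : Z ⊆ cubeVerts d)
    (hle : ∀ z ∈ Z, ∀ i, z i ≤ y i) (h0Z : (0 : Fin d → ℝ) ∉ Z) (hyZ : y ∉ Z)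
    (hcone : y ∈ coneHull Z) :
    ¬ IsExtreme ℝ (convexHull ℝ (Z ∪ {0, y})) (segment ℝ 0 y) :=
  stmt19_general y hy hy0 Z hZ h0Z hyZ hcone
end
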